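/- There exists a differentiable vector field r : E → E (E = EuclideanSpace ℝ (Fin 2)), not identically zero, such that: (i) r satisfies the gauge freedom condition with respect to the standard Gaussian density p(x) = (2π)⁻¹ · exp(−‖x‖²/2), i.e., div r(x) + ⟪r(x), ∇(Real.log ∘ p)(x)⟫ = 0 for all x; and (ii) r is not conservative: there is no differentiable φ : E → ℝ with ∇φ(x) = r(x) for all x. (Section 4: conservativity is not necessary for exact density estimation and sampling, since the gauge freedom condition can hold for non-conservative fields.) -/

import Mathlib

/-!
Take for `r` a rotation `J` by a right angle. Since `⟪J x, x⟫ = 0`, the trace of `J`, hence the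
divergence of `r`, vanishes, and so does `⟪J x, ∇ log p x⟫ = -⟪J x, x⟫`. On the other hand the
derivative of a gradient field is symmetric (symmetry of second derivatives), and a symmetric map
`A` with `⟪A x, x⟫ = 0` for all `x` is zero, so `J` is not a gradient.
-/

open scoped RealInnerProductSpace
open Real

/-- The divergence of a vector field `v` at `x`: the trace of its Fréchet derivative. -/
noncomputable def div (v : EuclideanSpace ℝ (Fin 2) → EuclideanSpace ℝ (Fin 2))
    (x : EuclideanSpace ℝ (Fin 2)) : ℝ :=
  LinearMap.trace ℝ (EuclideanSpace ℝ (Fin 2)) (fderiv ℝ v x).toLinearMap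

section

variable {E : Type*} [NormedAddCommGroup E] [InnerProductSpace ℝ E]

theorem LinearMap.trace_eq_zero_of_forall_inner_map_self_eq_zero [FiniteDimensional ℝ E]
    {T : E →ₗ[ℝ] E} (hT : ∀ x, ⟪T x, x⟫ = 0) : trace ℝ E T = 0 := by
  have hT' (x : E) : ⟪x, T x⟫ = 0 := by rw [real_inner_comm, hT]
  simp [T.trace_eq_sum_inner (stdOrthonormalBasis ℝ E), hT']

theorem exists_continuousLinearMap_ne_zero_inner_map_self_eq_zero
    [Fact (Module.finrank ℝ E = 2)] : ∃ A : E →L[ℝ] E, A ≠ 0 ∧ ∀ x, ⟪A x, x⟫ = 0 := by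
  have : FiniteDimensional ℝ E := .of_fact_finrank_eq_two
  let o : Orientation ℝ E (Fin 2) := (Module.finBasisOfFinrankEq ℝ E Fact.out).orientation
  have : Nontrivial E := Module.nontrivial_of_finrank_eq_succ (R := ℝ) (n := 1) Fact.out
  obtain ⟨x, hx⟩ := exists_ne (0 : E)
  refine ⟨o.rightAngleRotation.toContinuousLinearEquiv, fun h => hx ?_,
    o.inner_rightAngleRotation_self⟩
  simpa using congr($h x)

variable [CompleteSpace E]

theorem hasGradientAt_log_gaussian {c : ℝ} (hc : 0 < c) (x : E) :
    HasGradientAt (Real.log ∘ fun y : E => c * exp (-‖y‖ ^ 2 / 2)) (-x) x := by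
  have hlog : (Real.log ∘ fun y : E => c * exp (-‖y‖ ^ 2 / 2)) =
      fun y => Real.log c + -2⁻¹ * ‖y‖ ^ 2 := by
    funext y
    rw [Function.comp_apply, Real.log_mul hc.ne' (exp_ne_zero _), Real.log_exp]
    ring
  rw [hlog, hasGradientAt_iff_hasFDerivAt]
  refine (((hasStrictFDerivAt_norm_sq x).hasFDerivAt.const_mul _).const_add _).congr_fderiv ?_
  ext y
  simp

theorem isSymmetric_of_forall_hasGradientAt {φ : E → ℝ} {A : E →L[ℝ] E}
    (h : ∀ x, HasGradientAt φ (A x) x) : (A : E →ₗ[ℝ] E).IsSymmetric := by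
  intro u v
  let B : E →L[ℝ] StrongDual ℝ E := (innerSL ℝ).comp A
  have := second_derivative_symmetric h (B.hasFDerivAt (x := 0)) u v
  simp only [B, ContinuousLinearMap.comp_apply, innerSL_apply_apply] at this
  rw [ContinuousLinearMap.coe_coe, this, real_inner_comm]

end

open scoped EuclideanSpace

theorem div_continuousLinearMap (A : EuclideanSpace ℝ (Fin 2) →L[ℝ] EuclideanSpace ℝ (Fin 2))
    (x : EuclideanSpace ℝ (Fin 2)) :
    div A x = LinearMap.trace ℝ (EuclideanSpace ℝ (Fin 2)) A := by
  rw [div, A.fderiv]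

theorem div_add_inner_gradient_log_gaussian_eq_zero
    {A : EuclideanSpace ℝ (Fin 2) →L[ℝ] EuclideanSpace ℝ (Fin 2)} (hA : ∀ x, ⟪A x, x⟫ = 0)
    (x : EuclideanSpace ℝ (Fin 2)) :
    div A x + ⟪A x, gradient (Real.log ∘ fun y : EuclideanSpace ℝ (Fin 2) =>
      (2 * π)⁻¹ * Real.exp (-‖y‖ ^ 2 / 2)) x⟫ = 0 := by
  rw [div_continuousLinearMap, LinearMap.trace_eq_zero_of_forall_inner_map_self_eq_zero hA,
    (hasGradientAt_log_gaussian (by positivity) x).gradient, inner_neg_right, hA, zero_add,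
    neg_zero]

/-- Section 4: conservativity is not necessary. There is a nonzero differentiable
vector field satisfying the gauge freedom condition for the standard Gaussian density
which is not the gradient of any differentiable potential. -/
theorem stmt11 :
    ∃ r : EuclideanSpace ℝ (Fin 2) → EuclideanSpace ℝ (Fin 2),
      Differentiable ℝ r ∧ r ≠ 0 ∧
      (∀ x, div r x +
        ⟪r x, gradient (Real.log ∘ fun y : EuclideanSpace ℝ (Fin 2) =>
          (2 * π)⁻¹ * Real.exp (-‖y‖ ^ 2 / 2)) x⟫ = 0) ∧
      ¬ ∃ φ : EuclideanSpace ℝ (Fin 2) → ℝ, Differentiable ℝ φ ∧ ∀ x, gradient φ x = r x := by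
  obtain ⟨A, hA0, hA⟩ := exists_continuousLinearMap_ne_zero_inner_map_self_eq_zero
    (E := EuclideanSpace ℝ (Fin 2))
  refine ⟨A, A.differentiable, fun h => hA0 (DFunLike.coe_injective h),
    div_add_inner_gradient_log_gaussian_eq_zero hA, ?_⟩
  rintro ⟨φ, hφ, hgrad⟩
  have hsymm := isSymmetric_of_forall_hasGradientAt fun x => hgrad x ▸ (hφ x).hasGradientAt
  exact hA0 (ContinuousLinearMap.coe_injective (hsymm.inner_map_self_eq_zero.mp hA))
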